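/- arXiv:1802.09590 — 2 statements merged into one kernel-verified Lean document; each statement's English description precedes it below -/
import Mathlib

section
/- Let 1 ≤ m < n, let u^1,…,u^m ∈ ℝ^n, and let U ∈ ℝ^{n×m} be the matrix with columns u^1,…,u^m. The following two conditions are equivalent: (1) for every choice of scalars c_1,…,c_m ∈ ℝ, not all zero, s^+(Σ_{k=1}^m c_k u^k) ≤ m − 1; (2) all minors of order m of U, i.e. all determinants of the m×m submatrices of U obtained by selecting rows i_1 < … < i_m (and all m columns), are nonzero and have the same sign. -/
open Matrix MeasureTheory Set Polynomial Filter

noncomputable section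

/-- Number of sign changes between adjacent entries of a list of reals. -/
def signChanges : List ℝ → ℕ
  | [] => 0
  | [_] => 0
  | a :: b :: l => (if a * b < 0 then 1 else 0) + signChanges (b :: l)

/-- `s^-(y)`: the number of sign variations in `y` after deleting all zero entries. -/
def sMinus {n : ℕ} (y : Fin n → ℝ) : ℕ :=
  signChanges ((List.ofFn y).filter (fun x => decide (x ≠ 0)))

/-- `s^+(y)`: the maximal number of sign variations in `y` after each zero entry is
replaced by either `+1` or `-1`. -/
def sPlus {n : ℕ} (y : Fin n → ℝ) : ℕ :=
  Finset.univ.sup fun ε : Fin n → Bool =>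
    signChanges (List.ofFn fun i => if y i = 0 then (if ε i then (1:ℝ) else -1) else y i)

/-- A matrix is totally positive if all its minors are positive. -/
def IsTP {n m : ℕ} (A : Matrix (Fin n) (Fin m) ℝ) : Prop :=
  ∀ (k : ℕ) (r : Fin k → Fin n) (c : Fin k → Fin m),
    StrictMono r → StrictMono c → 0 < (A.submatrix r c).det

/-- A matrix is totally nonnegative if all its minors are nonnegative. -/
def IsTN {n m : ℕ} (A : Matrix (Fin n) (Fin m) ℝ) : Prop :=
  ∀ (k : ℕ) (r : Fin k → Fin n) (c : Fin k → Fin m),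
    StrictMono r → StrictMono c → 0 ≤ (A.submatrix r c).det

/-- Tridiagonal with nonnegative sub- and super-diagonal entries. -/
def InM {n : ℕ} (A : Matrix (Fin n) (Fin n) ℝ) : Prop :=
  (∀ i j : Fin n, ((i : ℕ) + 1 < (j : ℕ) ∨ (j : ℕ) + 1 < (i : ℕ)) → A i j = 0) ∧
  (∀ i j : Fin n, ((i : ℕ) = (j : ℕ) + 1 ∨ (j : ℕ) = (i : ℕ) + 1) → 0 ≤ A i j)

/-- Tridiagonal with positive sub- and super-diagonal entries. -/
def InMPlus {n : ℕ} (A : Matrix (Fin n) (Fin n) ℝ) : Prop :=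
  (∀ i j : Fin n, ((i : ℕ) + 1 < (j : ℕ) ∨ (j : ℕ) + 1 < (i : ℕ)) → A i j = 0) ∧
  (∀ i j : Fin n, ((i : ℕ) = (j : ℕ) + 1 ∨ (j : ℕ) = (i : ℕ) + 1) → 0 < A i j)

/-- `A` is measurable and locally essentially bounded on `(a,b)` (entrywise). -/
def GoodCoeff {n : ℕ} (a b : ℝ) (A : ℝ → Matrix (Fin n) (Fin n) ℝ) : Prop :=
  (∀ i j, Measurable fun t => A t i j) ∧
  ∀ K : Set ℝ, K ⊆ Set.Ioo a b → IsCompact K →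
    ∃ C : ℝ, ∀ᵐ t ∂volume, t ∈ K → ∀ i j, |A t i j| ≤ C

/-- `Φ` is the transition matrix of `ż = A(t)z` on `(a,b)`, encoded through the
equivalent integral equation `Φ(t,t0) = I + ∫_{t0}^t A(s)Φ(s,t0) ds`. -/
def IsTransitionOn {n : ℕ} (a b : ℝ) (A : ℝ → Matrix (Fin n) (Fin n) ℝ)
    (Φ : ℝ → ℝ → Matrix (Fin n) (Fin n) ℝ) : Prop :=
  ∀ t0 ∈ Set.Ioo a b, ∀ t ∈ Set.Ioo a b, ∀ i j,
    Φ t t0 i j = (1 : Matrix (Fin n) (Fin n) ℝ) i j + ∫ s in t0..t, (A s * Φ s t0) i j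

/-!
If `s⁺(U c) ≥ m`, some rows `i₀ < ⋯ < i_m` carry weakly alternating signs of `U c`. Expanding
the singular matrix `[U c | U]` on these rows along its first column gives
`∑ₚ (-1)ᵖ det U[î_p] (U c)_{i_p} = 0`, where `U[î_p]` keeps the rows other than `i_p`; when all
maximal minors share a sign, the terms share a sign too, so `U c` vanishes on those rows and a
maximal minor is singular.

Conversely, assume `s⁺(U c) < m` for `c ≠ 0` and fix `m + 1` rows. A kernel vector of the minor
omitting one of them makes `U c` vanish on all the rows but one, so `s⁺(U c) ≥ m`: every maximal
minor is invertible. Choosing `c` so that `U c` vanishes off two consecutive rows `p, p + 1`, the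
same expansion gives `A (U c)_p = B (U c)_{p+1}` for the minors `A, B` omitting these rows, and
`s⁺(U c) < m` forces `(U c)_p (U c)_{p+1} > 0`, whence `A B > 0`. Every choice of `m` rows is
reached from the first `m` rows by such moves.
-/

lemma signChanges_zero_cons (l : List ℝ) : signChanges (0 :: l) = signChanges l := by
  cases l <;> simp [signChanges]

lemma signChanges_cons_le_cons_cons (a : ℝ) {b : ℝ} (hb : b ≠ 0) (l : List ℝ) :
    signChanges (a :: l) ≤ signChanges (a :: b :: l) := by
  cases l with
  | nil => simp [signChanges]
  | cons c l =>
    simp only [signChanges]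
    have hsplit : a * c < 0 → a * b < 0 ∨ b * c < 0 := by
      intro h
      rcases hb.lt_or_gt with hb | hb <;> rcases mul_neg_iff.mp h with ⟨ha, hc⟩ | ⟨ha, hc⟩ <;>
        first | exact .inl (by nlinarith) | exact .inr (by nlinarith)
    split_ifs <;> grind

lemma signChanges_cons_le_cons_of_sublist {l₁ l₂ : List ℝ} (h : l₁.Sublist l₂)
    (hl₂ : ∀ x ∈ l₂, x ≠ 0) (a : ℝ) : signChanges (a :: l₁) ≤ signChanges (a :: l₂) := by
  induction h generalizing a with
  | slnil => rfl
  | cons b _ ih =>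
    have hb := hl₂ b List.mem_cons_self
    exact (ih (fun x hx => hl₂ x (List.mem_cons_of_mem _ hx)) a).trans
      (signChanges_cons_le_cons_cons a hb _)
  | cons_cons b _ ih =>
    simpa only [signChanges] using
      Nat.add_le_add_left (ih (fun x hx => hl₂ x (List.mem_cons_of_mem _ hx)) b) _

lemma signChanges_le_of_sublist {l₁ l₂ : List ℝ} (h : l₁.Sublist l₂) (hl₂ : ∀ x ∈ l₂, x ≠ 0) :
    signChanges l₁ ≤ signChanges l₂ := by
  simpa only [signChanges_zero_cons] using signChanges_cons_le_cons_of_sublist h hl₂ 0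

lemma length_le_signChanges_add_one_of_isChain :
    ∀ {l : List ℝ}, l.IsChain (· * · < 0) → l.length ≤ signChanges l + 1
  | [], _ => by simp
  | [_], _ => by simp [signChanges]
  | a :: b :: l, h => by
    rw [List.isChain_cons_cons] at h
    have := length_le_signChanges_add_one_of_isChain h.2
    simp only [signChanges, h.1, if_true, List.length_cons] at this ⊢
    omega

lemma exists_isChain_sublist_cons :
    ∀ (a : ℝ) (l : List ℝ), a ≠ 0 → (∀ x ∈ l, x ≠ 0) →
      ∃ l', (a :: l').Sublist (a :: l) ∧ (a :: l').IsChain (· * · < 0) ∧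
        signChanges (a :: l) ≤ l'.length
  | a, [], _, _ => ⟨[], .refl _, .singleton _, by simp [signChanges]⟩
  | a, b :: l, ha, hl => by
    have hb := hl b List.mem_cons_self
    obtain ⟨l', hsub, hchain, hlen⟩ :=
      exists_isChain_sublist_cons b l hb (fun x hx => hl x (List.mem_cons_of_mem _ hx))
    by_cases hab : a * b < 0
    · refine ⟨b :: l', hsub.cons_cons a, List.isChain_cons_cons.mpr ⟨hab, hchain⟩, ?_⟩
      simp only [signChanges, hab, if_true, List.length_cons]
      omega
    -- `a` and `b` have the same sign, so `a` can replace `b` at the head of the chain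
    refine ⟨l', (List.sublist_of_cons_sublist hsub).cons_cons a, ?_, ?_⟩
    · cases l' with
      | nil => exact .singleton _
      | cons c l' =>
        rw [List.isChain_cons_cons] at hchain ⊢
        refine ⟨?_, hchain.2⟩
        rcases ha.lt_or_gt with ha | ha <;> rcases hb.lt_or_gt with hb | hb <;>
          nlinarith [hchain.1]
    · simpa only [signChanges, hab, if_false, zero_add] using hlen

lemma List.sublist_ofFn_iff {α : Type*} {n : ℕ} {z : Fin n → α} {l : List α} :
    l.Sublist (List.ofFn z) ↔
      ∃ (k : ℕ) (w : Fin k → Fin n), StrictMono w ∧ l = List.ofFn (z ∘ w) := by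
  rw [List.sublist_iff_exists_fin_orderEmbedding_get_eq]
  constructor
  · rintro ⟨f, hf⟩
    refine ⟨l.length, Fin.cast List.length_ofFn ∘ f, fun a b hab => f.strictMono hab, ?_⟩
    refine List.ext_get (by simp) fun i h₁ h₂ => ?_
    simpa [Fin.cast] using hf ⟨i, h₁⟩
  · rintro ⟨k, w, hw, rfl⟩
    refine ⟨OrderEmbedding.ofStrictMono (Fin.cast (by simp) ∘ w ∘ Fin.cast (by simp))
      fun a b hab => hw hab, fun i => by simp; rfl⟩

lemma le_signChanges_ofFn_iff {n p : ℕ} (hn : n ≠ 0) {z : Fin n → ℝ} (hz : ∀ i, z i ≠ 0) :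
    p ≤ signChanges (List.ofFn z) ↔
      ∃ w : Fin (p + 1) → Fin n, StrictMono w ∧
        ∀ j : Fin p, z (w j.castSucc) * z (w j.succ) < 0 := by
  have hz' : ∀ x ∈ List.ofFn z, x ≠ 0 := by simpa [List.mem_ofFn] using hz
  constructor
  · intro hp
    obtain ⟨n, rfl⟩ := Nat.exists_eq_succ_of_ne_zero hn
    rw [List.ofFn_succ] at hp hz'
    obtain ⟨l, hsub, hchain, hlen⟩ := exists_isChain_sublist_cons (z 0) _ (hz 0)
      fun x hx => hz' x (List.mem_cons_of_mem _ hx)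
    have htake : ((z 0 :: l).take (p + 1)).Sublist (List.ofFn z) := by
      rw [List.ofFn_succ]
      exact (List.take_sublist _ _).trans hsub
    obtain ⟨k, w, hw, hk⟩ := List.sublist_ofFn_iff.mp htake
    obtain rfl : k = p + 1 := by
      have := congrArg List.length hk
      simp only [List.length_take, List.length_cons, List.length_ofFn] at this
      omega
    have hwchain := hk ▸ hchain.take (p + 1)
    rw [List.isChain_ofFn] at hwchain
    exact ⟨w, hw, fun j => hwchain j (by omega)⟩
  · rintro ⟨w, hw, halt⟩
    have hchain : (List.ofFn (z ∘ w)).IsChain (· * · < 0) :=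
      List.isChain_ofFn.mpr fun i hi => halt ⟨i, by omega⟩
    have hlen := length_le_signChanges_add_one_of_isChain hchain
    have hsub := signChanges_le_of_sublist (List.sublist_ofFn_iff.mpr ⟨_, w, hw, rfl⟩) hz'
    rw [List.length_ofFn] at hlen
    omega

lemma forall_mul_succ_neg_iff {p : ℕ} {g : Fin (p + 1) → ℝ} (hg : ∀ j, g j ≠ 0) :
    (∀ j : Fin p, g j.castSucc * g j.succ < 0) ↔
      ∃ s ≠ 0, ∀ j : Fin (p + 1), 0 < (-1) ^ (j : ℕ) * s * g j := by
  constructor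
  · intro halt
    refine ⟨g 0, hg 0, fun j => ?_⟩
    induction j using Fin.induction with
    | zero => simpa using mul_self_pos.mpr (hg 0)
    | succ j ih =>
      rw [Fin.val_castSucc] at ih
      have : (-1) ^ (j : ℕ) * g 0 * g j.succ < 0 := by
        nlinarith [halt j, sq_nonneg (g j.castSucc)]
      rw [Fin.val_succ, pow_succ]
      linarith
  · rintro ⟨s, -, hpos⟩ j
    have h₁ := hpos j.castSucc
    have h₂ := hpos j.succ
    rw [Fin.val_castSucc] at h₁
    rw [Fin.val_succ, pow_succ] at h₂
    by_contra! h
    nlinarith [mul_nonneg h (sq_nonneg ((-1) ^ (j : ℕ) * s))]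

def fillZeros {n : ℕ} (y : Fin n → ℝ) (ε : Fin n → Bool) : Fin n → ℝ :=
  fun i => if y i = 0 then (if ε i then 1 else -1) else y i

lemma fillZeros_ne_zero {n : ℕ} (y : Fin n → ℝ) (ε : Fin n → Bool) (i : Fin n) :
    fillZeros y ε i ≠ 0 := by
  unfold fillZeros
  split_ifs <;> norm_num [*]

lemma le_sPlus_iff {n p : ℕ} {y : Fin n → ℝ} :
    p ≤ sPlus y ↔ ∃ ε, p ≤ signChanges (List.ofFn (fillZeros y ε)) := by
  constructor
  · intro h
    obtain ⟨ε, -, hε⟩ := Finset.exists_mem_eq_sup Finset.univ Finset.univ_nonempty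
      fun ε => signChanges (List.ofFn (fillZeros y ε))
    exact ⟨ε, hε ▸ h⟩
  · rintro ⟨ε, h⟩
    exact h.trans (Finset.le_sup (f := fun ε => signChanges (List.ofFn (fillZeros y ε)))
      (Finset.mem_univ ε))

lemma le_sPlus_of_alternating {n p : ℕ} {y : Fin n → ℝ} {w : Fin (p + 1) → Fin n}
    (hw : StrictMono w) {s : ℝ} (hs : s ≠ 0)
    (hy : ∀ j : Fin (p + 1), 0 ≤ (-1) ^ (j : ℕ) * s * y (w j)) : p ≤ sPlus y := by
  classical
  -- fill the zeros of `y` on the range of `w` with the signs the pattern prescribes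
  set ε : Fin n → Bool := fun i => decide (∃ j, w j = i ∧ 0 < (-1) ^ (j : ℕ) * s)
  have hpos : ∀ j : Fin (p + 1), 0 < (-1) ^ (j : ℕ) * s * fillZeros y ε (w j) := by
    intro j
    have hσ : (-1) ^ (j : ℕ) * s ≠ 0 := mul_ne_zero (pow_ne_zero _ (by norm_num)) hs
    by_cases h0 : y (w j) = 0
    · have hε : ε (w j) = decide (0 < (-1) ^ (j : ℕ) * s) := by simp [ε, hw.injective.eq_iff]
      simp only [fillZeros, h0, if_true, hε]
      rcases hσ.lt_or_gt with h | h <;> simp [h, h.not_gt]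
    · simpa only [fillZeros, h0, if_false] using (hy j).lt_of_ne (by simp [hσ, h0])
  have halt := (forall_mul_succ_neg_iff fun j => fillZeros_ne_zero y ε (w j)).mpr ⟨s, hs, hpos⟩
  exact le_sPlus_iff.mpr ⟨ε, (le_signChanges_ofFn_iff (w 0).pos.ne' (fillZeros_ne_zero y ε)).mpr
    ⟨w, hw, halt⟩⟩

lemma exists_alternating_of_le_sPlus {n p : ℕ} (hn : n ≠ 0) {y : Fin n → ℝ}
    (h : p ≤ sPlus y) :
    ∃ w : Fin (p + 1) → Fin n, StrictMono w ∧
      ∃ s ≠ 0, ∀ j : Fin (p + 1), 0 ≤ (-1) ^ (j : ℕ) * s * y (w j) := by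
  obtain ⟨ε, hε⟩ := le_sPlus_iff.mp h
  obtain ⟨w, hw, halt⟩ := (le_signChanges_ofFn_iff hn (fillZeros_ne_zero y ε)).mp hε
  obtain ⟨s, hs, hpos⟩ :=
    (forall_mul_succ_neg_iff fun j => fillZeros_ne_zero y ε (w j)).mp halt
  refine ⟨w, hw, s, hs, fun j => ?_⟩
  by_cases h0 : y (w j) = 0
  · simp [h0]
  · simpa [fillZeros, h0] using (hpos j).le

lemma le_sPlus_of_eq_zero_of_ne {n p : ℕ} {y : Fin n → ℝ} {w : Fin (p + 1) → Fin n}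
    (hw : StrictMono w) (j : Fin (p + 1)) (hzero : ∀ i, i ≠ j → y (w i) = 0) : p ≤ sPlus y := by
  set σ : ℝ := (-1) ^ (j : ℕ)
  refine le_sPlus_of_alternating hw (s := if 0 ≤ σ * y (w j) then 1 else -1)
    (by split_ifs <;> norm_num) fun i => ?_
  rcases eq_or_ne i j with rfl | hi
  · split_ifs with h <;> linarith
  · simp [hzero i hi]

lemma le_sPlus_of_eq_zero_of_ne_of_ne {n p : ℕ} {y : Fin n → ℝ} {w : Fin (p + 1) → Fin n}
    (hw : StrictMono w) (j : Fin p) (hzero : ∀ i, i ≠ j.castSucc → i ≠ j.succ → y (w i) = 0)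
    (hj : y (w j.castSucc) * y (w j.succ) ≤ 0) : p ≤ sPlus y := by
  set a := y (w j.castSucc)
  set b := y (w j.succ)
  obtain ⟨t, ht, hta, htb⟩ : ∃ t ≠ 0, 0 ≤ t * a ∧ t * b ≤ 0 := by
    by_cases hab : a = b
    · have ha : a = 0 := mul_self_eq_zero.mp (le_antisymm (hab ▸ hj) (mul_self_nonneg a))
      exact ⟨1, one_ne_zero, by simp [ha], by simp [← hab, ha]⟩
    · exact ⟨a - b, sub_ne_zero.mpr hab, by nlinarith [sq_nonneg a], by nlinarith [sq_nonneg b]⟩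
  set σ : ℝ := (-1) ^ (j : ℕ)
  have hσ : σ * σ = 1 := by rw [← mul_pow]; norm_num
  refine le_sPlus_of_alternating hw (s := σ * t) (by simp [σ, ht]) fun i => ?_
  rcases eq_or_ne i j.castSucc with rfl | h₁
  · rw [Fin.val_castSucc]
    linear_combination hta - t * a * hσ
  rcases eq_or_ne i j.succ with rfl | h₂
  · rw [Fin.val_succ, pow_succ]
    linear_combination htb + t * b * hσ
  · simp [hzero i h₁ h₂]

lemma Matrix.sum_det_submatrix_succAbove_mul_mulVec_eq_zero {R ι : Type*} [CommRing R]
    [IsDomain R] {m : ℕ} (U : Matrix ι (Fin m) R) (w : Fin (m + 1) → ι) (c : Fin m → R) :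
    ∑ p : Fin (m + 1), (-1) ^ (p : ℕ) * (U.submatrix (w ∘ p.succAbove) id).det * (U *ᵥ c) (w p)
      = 0 := by
  classical
  -- expand along the first column the vanishing determinant of `[U c | U]` on the rows `w`
  let W : Matrix (Fin (m + 1)) (Fin (m + 1)) R :=
    Matrix.of fun i => Fin.cons ((U *ᵥ c) (w i)) (U (w i))
  have hW : W.det = 0 := by
    rw [← Matrix.exists_mulVec_eq_zero_iff]
    refine ⟨Fin.cons 1 (-c), fun h => by simpa using congrFun h 0, funext fun i => ?_⟩
    simp [W, Matrix.mulVec, dotProduct, Fin.sum_univ_succ]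
  rw [Matrix.det_succ_column_zero] at hW
  rw [← hW]
  refine Finset.sum_congr rfl fun p _ => ?_
  have hminor : W.submatrix p.succAbove Fin.succ = U.submatrix (w ∘ p.succAbove) id := by
    ext; simp [W]
  rw [hminor]
  simp only [W, Matrix.of_apply, Fin.cons_zero]
  ring

lemma sPlus_mulVec_lt_of_forall_det_pos {n m : ℕ} (hn : n ≠ 0) {U : Matrix (Fin n) (Fin m) ℝ}
    {ε : ℝ} (hpos : ∀ r : Fin m → Fin n, StrictMono r → 0 < ε * (U.submatrix r id).det)
    {c : Fin m → ℝ} (hc : c ≠ 0) : sPlus (U *ᵥ c) < m := by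
  by_contra! h
  obtain ⟨w, hw, s, hs, hpat⟩ := exists_alternating_of_le_sPlus hn h
  have hminor (p : Fin (m + 1)) : 0 < ε * (U.submatrix (w ∘ p.succAbove) id).det :=
    hpos _ (hw.comp (Fin.strictMono_succAbove p))
  -- scaled by `ε * s`, the Laplace identity becomes a vanishing sum of nonnegative terms
  have hsum : ∑ p : Fin (m + 1), ε * (U.submatrix (w ∘ p.succAbove) id).det *
      ((-1) ^ (p : ℕ) * s * (U *ᵥ c) (w p)) = 0 := by
    calc _ = ε * s * ∑ p : Fin (m + 1),
          (-1) ^ (p : ℕ) * (U.submatrix (w ∘ p.succAbove) id).det * (U *ᵥ c) (w p) := by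
          rw [Finset.mul_sum]
          exact Finset.sum_congr rfl fun p _ => by ring
      _ = 0 := by rw [Matrix.sum_det_submatrix_succAbove_mul_mulVec_eq_zero, mul_zero]
  have hzero (p : Fin (m + 1)) : (U *ᵥ c) (w p) = 0 := by
    have := (Finset.sum_eq_zero_iff_of_nonneg fun p _ => mul_nonneg (hminor p).le (hpat p)).mp
      hsum p (Finset.mem_univ p)
    simpa [(hminor p).ne', hs] using this
  have hdet : (U.submatrix (w ∘ (Fin.last m).succAbove) id).det = 0 :=
    Matrix.exists_mulVec_eq_zero_iff.mp ⟨c, hc, funext fun q => hzero _⟩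
  exact (hminor (Fin.last m)).ne' (by rw [hdet, mul_zero])

lemma Fin.insertNth_castSucc_comp_succ_succAbove {α : Type*} {m : ℕ} (k : Fin m) (x : α)
    (f : Fin m → α) : Fin.insertNth k.castSucc x f ∘ k.succ.succAbove = Function.update f k x := by
  funext q
  rcases eq_or_ne q k with rfl | hq
  · simp
  have : k.succ.succAbove q = k.castSucc.succAbove q := by
    rcases hq.lt_or_gt with h | h
    · rw [Fin.succAbove_succ_of_le _ _ h.le, Fin.succAbove_castSucc_of_lt _ _ h]
    · rw [Fin.succAbove_succ_of_lt _ _ h, Fin.succAbove_castSucc_of_le _ _ h.le]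
  simp [this, hq]

theorem strictMono_fin_induction {m n : ℕ} (hmn : m ≤ n) {P : (Fin m → Fin n) → Prop}
    (base : P (Fin.castLE hmn))
    (step : ∀ w : Fin (m + 1) → Fin n, StrictMono w → ∀ j : Fin m,
      P (w ∘ j.succ.succAbove) → P (w ∘ j.castSucc.succAbove))
    {r : Fin m → Fin n} (hr : StrictMono r) : P r := by
  induction hN : ∑ j, (r j : ℕ) using Nat.strong_induction_on generalizing r with
  | _ N ih =>
  by_cases hr₀ : ∀ j, (r j : ℕ) = j
  · convert base
    ext j
    simp [hr₀]
  push Not at hr₀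
  obtain ⟨k, hk, hmin⟩ := WellFounded.has_min wellFounded_lt {j | (r j : ℕ) ≠ j} hr₀
  have hbelow (j : Fin m) (hj : j < k) : (r j : ℕ) = j := by_contra (hmin j · hj)
  have hk' : (k : ℕ) < r k := by
    refine lt_of_le_of_ne ?_ (Ne.symm hk)
    by_contra! h
    exact hk (congrArg Fin.val (hr.injective (Fin.ext (hbelow ⟨r k, h.trans k.isLt⟩ h))))
  -- `r` and the map obtained by lowering its `k`-th value to `k` come from one `w`
  set w := Fin.insertNth (α := fun _ => Fin n) k.castSucc (Fin.castLE hmn k) r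
  have hw : StrictMono w := by
    refine (Fin.strictMono_insertNth_iff _ _ _).mpr ⟨hr, fun i hi => ?_, fun i hi => ?_⟩
    · rw [Fin.castSucc_lt_castSucc_iff] at hi
      simp [Fin.lt_def, hbelow i hi, hi]
    · rw [Fin.castSucc_le_castSucc_iff] at hi
      exact Fin.lt_def.mpr (hk'.trans_le (hr.monotone hi))
  have hr_eq : w ∘ k.castSucc.succAbove = r := funext fun q => Fin.insertNth_apply_succAbove ..
  rw [← hr_eq]
  refine step w hw k (ih _ ?_ (hw.comp (Fin.strictMono_succAbove _)) rfl)
  rw [← hN, Fin.insertNth_castSucc_comp_succ_succAbove]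
  refine Finset.sum_lt_sum (fun q _ => ?_) ⟨k, Finset.mem_univ _, by simpa using hk'⟩
  rcases eq_or_ne q k with rfl | hq <;> simp [*, hk'.le]

lemma det_submatrix_succAbove_ne_zero {n m : ℕ} {U : Matrix (Fin n) (Fin m) ℝ}
    (H : ∀ c : Fin m → ℝ, c ≠ 0 → sPlus (U *ᵥ c) < m) {w : Fin (m + 1) → Fin n}
    (hw : StrictMono w) (p : Fin (m + 1)) : (U.submatrix (w ∘ p.succAbove) id).det ≠ 0 := by
  intro h0
  obtain ⟨c, hc, hUc⟩ := Matrix.exists_mulVec_eq_zero_iff.mpr h0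
  refine (H c hc).not_ge (le_sPlus_of_eq_zero_of_ne hw p fun i hi => ?_)
  obtain ⟨q, rfl⟩ := Fin.exists_succAbove_eq hi
  exact congrFun hUc q

lemma det_mul_det_submatrix_succAbove_pos {n m : ℕ} {U : Matrix (Fin n) (Fin m) ℝ}
    (H : ∀ c : Fin m → ℝ, c ≠ 0 → sPlus (U *ᵥ c) < m) {w : Fin (m + 1) → Fin n}
    (hw : StrictMono w) (j : Fin m) :
    0 < (U.submatrix (w ∘ j.castSucc.succAbove) id).det *
      (U.submatrix (w ∘ j.succ.succAbove) id).det := by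
  set A := (U.submatrix (w ∘ j.castSucc.succAbove) id).det
  set B := (U.submatrix (w ∘ j.succ.succAbove) id).det
  -- a kernel vector of this minor with row `j` zeroed makes `U c` vanish on `w` off `j`, `j + 1`
  have hM : ((U.submatrix (w ∘ j.castSucc.succAbove) id).updateRow j 0).det = 0 :=
    Matrix.det_eq_zero_of_row_eq_zero j fun _ => by simp
  obtain ⟨c, hc, hMc⟩ := Matrix.exists_mulVec_eq_zero_iff.mpr hM
  have hzero (i : Fin (m + 1)) (h₁ : i ≠ j.castSucc) (h₂ : i ≠ j.succ) : (U *ᵥ c) (w i) = 0 := by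
    obtain ⟨q, rfl⟩ := Fin.exists_succAbove_eq h₁
    have hq : q ≠ j := by
      rintro rfl
      exact h₂ (Fin.succAbove_castSucc_self q)
    simpa [Matrix.mulVec, Matrix.updateRow_ne hq] using congrFun hMc q
  set a := (U *ᵥ c) (w j.castSucc)
  set b := (U *ᵥ c) (w j.succ)
  have hlap := Matrix.sum_det_submatrix_succAbove_mul_mulVec_eq_zero U w c
  rw [Fintype.sum_eq_add j.castSucc j.succ Fin.castSucc_lt_succ.ne
    fun i hi => by simp [hzero i hi.1 hi.2], Fin.val_castSucc, Fin.val_succ, pow_succ] at hlap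
  have hAB : A * a = B * b := by
    rcases neg_one_pow_eq_or ℝ (j : ℕ) with h | h <;> rw [h] at hlap <;> linarith
  have hab : 0 < a * b := by
    by_contra! hab
    exact (H c hc).not_ge (le_sPlus_of_eq_zero_of_ne_of_ne hw j hzero hab)
  have hA := det_submatrix_succAbove_ne_zero H hw j.castSucc
  have hB := det_submatrix_succAbove_ne_zero H hw j.succ
  have : 0 ≤ A * B * (a * b) :=
    calc 0 ≤ (A * a) * (B * b) := hAB ▸ mul_self_nonneg _
      _ = A * B * (a * b) := by ring
  exact (nonneg_of_mul_nonneg_left this hab).lt_of_ne (mul_ne_zero hA hB).symm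

theorem stmt1_general {n m : ℕ} (hmn : m < n)
    (U : Matrix (Fin n) (Fin m) ℝ) :
    (∀ c : Fin m → ℝ, c ≠ 0 → sPlus (U.mulVec c) ≤ m - 1) ↔
    (∃ ε : ℝ, (ε = 1 ∨ ε = -1) ∧
        ∀ r : Fin m → Fin n, StrictMono r →
          0 < ε * (U.submatrix r id).det) := by
  constructor
  · intro H
    -- `c ≠ 0` forces `0 < m`, so the truncated `m - 1` does no harm
    have H' (c : Fin m → ℝ) (hc : c ≠ 0) : sPlus (U *ᵥ c) < m := by
      obtain ⟨i, -⟩ := Function.ne_iff.mp hc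
      have := H c hc
      have := i.pos
      omega
    have h₀ := det_submatrix_succAbove_ne_zero H' (Fin.strictMono_castLE hmn) (Fin.last m)
    obtain ⟨ε, hε, hε₀⟩ : ∃ ε : ℝ, (ε = 1 ∨ ε = -1) ∧
        0 < ε * (U.submatrix (Fin.castLE hmn.le) id).det := by
      rcases h₀.lt_or_gt with h | h
      · exact ⟨-1, .inr rfl, by simpa using h⟩
      · exact ⟨1, .inl rfl, by simpa using h⟩
    refine ⟨ε, hε, fun r hr => strictMono_fin_induction
      (P := fun r => 0 < ε * (U.submatrix r id).det) hmn.le hε₀ (fun w hw j h => ?_) hr⟩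
    have hAB := det_mul_det_submatrix_succAbove_pos H' hw j
    nlinarith [mul_pos h hAB, mul_self_nonneg (U.submatrix (w ∘ j.succ.succAbove) id).det]
  · rintro ⟨ε, -, hpos⟩ c hc
    have := sPlus_mulVec_lt_of_forall_det_pos (by omega) hpos hc
    omega

/-- For `1 ≤ m < n` and `U ∈ ℝ^{n×m}` with columns `u^1,…,u^m`, the
following are equivalent: (1) every nontrivial linear combination `c` of the columns
satisfies `s^+(Uc) ≤ m - 1`; (2) all minors of order `m` of `U` are nonzero and have
the same sign. -/
theorem stmt1 {n m : ℕ} (hm : 1 ≤ m) (hmn : m < n)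
    (U : Matrix (Fin n) (Fin m) ℝ) :
    (∀ c : Fin m → ℝ, c ≠ 0 → sPlus (U.mulVec c) ≤ m - 1) ↔
    (∃ ε : ℝ, (ε = 1 ∨ ε = -1) ∧
        ∀ r : Fin m → Fin n, StrictMono r →
          0 < ε * (U.submatrix r id).det) :=
  stmt1_general hmn U

end
end

section
/- Let A : (a,b) → ℝ^{n×n} be measurable and locally essentially bounded, with transition matrix Φ, and suppose Φ(t,t0) is totally positive (TP) for all a < t0 < t < b. Let z be a nontrivial solution of ż = A(t)z, i.e. z(t) = Φ(t,t0)z0 with z0 ≠ 0. Then z(t) ∈ V for all t ∈ (a,b), except perhaps for up to n − 1 values of t. -/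
/-!
The heart of the matter is the variation-diminishing property of a totally positive matrix `P`:
`s⁺(P x) ≤ s⁻(x)` for `x ≠ 0`. Cutting `x` into its `s⁻(x) + 1` maximal blocks of constant sign
writes `P x = U w` with `w` strictly alternating in sign, where `U` collects the columns of `P`
block by block with nonnegative weights; by the Cauchy–Binet expansion every maximal minor of `U`
is positive, and such a `U` cannot produce `s⁻(x) + 1` sign changes.

Along the solution, `z t' = Φ(t', t) z t` for `t < t'`. At two exceptional times `t < t'`, i.e.
where `s⁻ < s⁺`, this gives `s⁻(z t') < s⁺(z t') ≤ s⁻(z t)`, so `s⁻ ∘ z` is strictly decreasing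
on the exceptional set and takes values in `{0, …, n - 2}`.
-/

open Matrix MeasureTheory Set Polynomial Filter

noncomputable section

@[simp] lemma signChanges_nil : signChanges [] = 0 := rfl

@[simp] lemma signChanges_singleton (a : ℝ) : signChanges [a] = 0 := rfl

lemma signChanges_cons_cons (a b : ℝ) (l : List ℝ) :
    signChanges (a :: b :: l) = (if a * b < 0 then 1 else 0) + signChanges (b :: l) := rfl

lemma signChanges_le_length_sub_one : ∀ l : List ℝ, signChanges l ≤ l.length - 1
  | [] => le_rfl
  | [_] => le_rfl
  | a :: b :: l => by
    have := signChanges_le_length_sub_one (b :: l)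
    simp only [signChanges_cons_cons, List.length_cons] at *
    split <;> omega

lemma signChanges_append_singleton : ∀ (l : List ℝ) (hl : l ≠ []) (a : ℝ),
    signChanges (l ++ [a]) = signChanges l + if l.getLast hl * a < 0 then 1 else 0
  | [b], _, a => by
    simp only [List.cons_append, List.nil_append, signChanges_cons_cons,
      signChanges_singleton, List.getLast_singleton, add_zero, zero_add]
    congr
  | b :: c :: l, _, a => by
    rw [List.cons_append, List.cons_append, signChanges_cons_cons, signChanges_cons_cons,
      List.getLast_cons (List.cons_ne_nil c l), ← List.cons_append,
      signChanges_append_singleton (c :: l) (List.cons_ne_nil c l) a, add_assoc]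

lemma neg_one_pow_signChanges_mul_pos : ∀ (l : List ℝ) (hl : l ≠ []), (∀ x ∈ l, x ≠ 0) →
    0 < (-1 : ℝ) ^ signChanges l * (l.head hl * l.getLast hl)
  | [a], _, h => by simpa using mul_self_pos.2 (h a (by simp))
  | a :: b :: l, _, h => by
    have ha : a ≠ 0 := h a (by simp)
    have hb : b ≠ 0 := h b (by simp)
    have ih := neg_one_pow_signChanges_mul_pos (b :: l) (List.cons_ne_nil b l)
      (fun x hx => h x (List.mem_cons_of_mem a hx))
    rw [List.head_cons] at ih
    rw [signChanges_cons_cons, List.getLast_cons (List.cons_ne_nil b l), List.head_cons, pow_add]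
    have hbb : 0 < b * b := mul_self_pos.2 hb
    split_ifs with hab
    · nlinarith
    · have hab' : 0 < a * b := lt_of_le_of_ne (not_lt.1 hab) (mul_ne_zero ha hb).symm
      nlinarith

lemma signChanges_append_singleton_eq_or (l : List ℝ) (a : ℝ) :
    signChanges (l ++ [a]) = signChanges l ∨ signChanges (l ++ [a]) = signChanges l + 1 := by
  rcases eq_or_ne l [] with rfl | hl
  · simp
  · rw [signChanges_append_singleton l hl]
    split_ifs <;> simp

def nonzeros (l : List ℝ) : List ℝ := l.filter fun x => decide (x ≠ 0)

lemma mem_nonzeros {l : List ℝ} {a : ℝ} : a ∈ nonzeros l ↔ a ∈ l ∧ a ≠ 0 := by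
  simp [nonzeros]

lemma nonzeros_append (l₁ l₂ : List ℝ) : nonzeros (l₁ ++ l₂) = nonzeros l₁ ++ nonzeros l₂ :=
  List.filter_append _ _

lemma nonzeros_singleton (a : ℝ) : nonzeros [a] = if a = 0 then [] else [a] := by
  by_cases ha : a = 0 <;> simp [nonzeros, ha]

lemma nonzeros_eq_self {l : List ℝ} (h : ∀ a ∈ l, a ≠ 0) : nonzeros l = l :=
  List.filter_eq_self.2 fun a ha => by simpa using h a ha

lemma sMinus_eq_signChanges {n : ℕ} {w : Fin n → ℝ} (hw : ∀ i, w i ≠ 0) :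
    sMinus w = signChanges (List.ofFn w) := by
  rw [sMinus, ← nonzeros, nonzeros_eq_self]
  simpa [List.mem_ofFn] using hw

section PrefixSignChanges

variable {n : ℕ} (x : Fin n → ℝ)

def prefixSignChanges (j : ℕ) : ℕ := signChanges (nonzeros ((List.ofFn x).take (j + 1)))

lemma take_ofFn_add_one {j : ℕ} (hj : j < n) :
    (List.ofFn x).take (j + 1) = (List.ofFn x).take j ++ [x ⟨j, hj⟩] := by
  simp [List.take_add_one, hj]

lemma prefixSignChanges_of_le {j : ℕ} (hj : n ≤ j + 1) : prefixSignChanges x j = sMinus x := by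
  rw [prefixSignChanges, List.take_of_length_le (by simpa using hj)]
  rfl

lemma prefixSignChanges_succ (j : ℕ) :
    prefixSignChanges x (j + 1) = prefixSignChanges x j ∨
      prefixSignChanges x (j + 1) = prefixSignChanges x j + 1 ∧
        ∃ h : j + 1 < n, x ⟨j + 1, h⟩ ≠ 0 := by
  by_cases hj : j + 1 < n
  · unfold prefixSignChanges
    rw [take_ofFn_add_one x hj, nonzeros_append, nonzeros_singleton]
    split_ifs with h0
    · simp
    · rcases signChanges_append_singleton_eq_or (nonzeros ((List.ofFn x).take (j + 1)))
        (x ⟨j + 1, hj⟩) with h | h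
      · exact Or.inl h
      · exact Or.inr ⟨h, hj, h0⟩
  · left
    rw [prefixSignChanges_of_le x (by omega), prefixSignChanges_of_le x (by omega)]

lemma monotone_prefixSignChanges : Monotone (prefixSignChanges x) :=
  monotone_nat_of_le_succ fun j => by rcases prefixSignChanges_succ x j with h | ⟨h, -⟩ <;> omega

lemma prefixSignChanges_eq_zero_of_forall_lt_eq_zero {j : ℕ} (hj : j < n)
    (h : ∀ i : Fin n, (i : ℕ) < j → x i = 0) : prefixSignChanges x j = 0 := by
  have hzero : nonzeros ((List.ofFn x).take j) = [] := by
    refine List.filter_eq_nil_iff.2 fun a ha => ?_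
    obtain ⟨i, hi, rfl⟩ := List.mem_take_iff_getElem.1 ha
    simp only [List.length_ofFn, lt_min_iff] at hi
    simpa using h ⟨i, hi.2⟩ hi.1
  apply Nat.le_zero.1
  refine (signChanges_le_length_sub_one _).trans ?_
  rw [take_ofFn_add_one x hj, nonzeros_append, hzero, nonzeros_singleton]
  split_ifs <;> simp

/-- `δ` is the first nonzero entry of `x`. -/
lemma exists_sign_prefixSignChanges (hx : x ≠ 0) : ∃ δ : ℝ, δ ≠ 0 ∧
    ∀ j : Fin n, x j ≠ 0 → 0 < (-1 : ℝ) ^ prefixSignChanges x j * δ * x j := by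
  obtain ⟨i, hi⟩ := Function.ne_iff.1 hx
  have hne : nonzeros (List.ofFn x) ≠ [] :=
    List.ne_nil_of_mem (mem_nonzeros.2 ⟨List.mem_ofFn.2 ⟨i, rfl⟩, hi⟩)
  refine ⟨(nonzeros (List.ofFn x)).head hne, (mem_nonzeros.1 (List.head_mem hne)).2,
    fun j hj => ?_⟩
  have hsplit : nonzeros ((List.ofFn x).take (j + 1)) =
      nonzeros ((List.ofFn x).take j) ++ [x j] := by
    rw [take_ofFn_add_one x j.isLt, nonzeros_append, nonzeros_singleton, if_neg hj]
  have hne' : nonzeros ((List.ofFn x).take (j + 1)) ≠ [] := by simp [hsplit]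
  have key := neg_one_pow_signChanges_mul_pos _ hne' fun a ha => (mem_nonzeros.1 ha).2
  have hhead : (nonzeros ((List.ofFn x).take (j + 1))).head hne' =
      (nonzeros (List.ofFn x)).head hne :=
    ((List.take_prefix (j + 1) (List.ofFn x)).filter _).head hne'
  have hlast : (nonzeros ((List.ofFn x).take (j + 1))).getLast hne' = x j := by
    simp only [hsplit, List.getLast_append_singleton]
  rw [hhead, hlast] at key
  rw [prefixSignChanges, mul_assoc]
  exact key

lemma exists_prefixSignChanges_eq (hx : x ≠ 0) {v : ℕ} (hv : v ≤ sMinus x) :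
    ∃ j : Fin n, prefixSignChanges x j = v ∧ x j ≠ 0 := by
  obtain ⟨i, hi⟩ := Function.ne_iff.1 hx
  rcases Nat.eq_zero_or_pos v with rfl | hv0
  · have hP : ∃ k, ∃ hk : k < n, x ⟨k, hk⟩ ≠ 0 := ⟨i, i.isLt, hi⟩
    obtain ⟨hk, hxk⟩ := Nat.find_spec hP
    refine ⟨⟨Nat.find hP, hk⟩, prefixSignChanges_eq_zero_of_forall_lt_eq_zero x hk
      fun p hp => ?_, hxk⟩
    by_contra hxp
    exact Nat.find_min hP hp ⟨p.isLt, hxp⟩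
  · have hQ : ∃ k, v ≤ prefixSignChanges x k :=
      ⟨n - 1, by rw [prefixSignChanges_of_le x (by have := i.pos; omega)]; exact hv⟩
    have hQ0 : Nat.find hQ ≠ 0 := fun h0 => by
      have := Nat.find_spec hQ
      rw [h0, prefixSignChanges_eq_zero_of_forall_lt_eq_zero x i.pos fun p hp => absurd hp
        (Nat.not_lt_zero _)] at this
      omega
    obtain ⟨k, hk⟩ := Nat.exists_eq_add_one_of_ne_zero hQ0
    have hlt : prefixSignChanges x k < v := not_le.1 (Nat.find_min hQ (m := k) (by omega))
    have hge := Nat.find_spec hQ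
    rw [hk] at hge
    rcases prefixSignChanges_succ x k with h | ⟨h, hkn, hxk⟩
    · omega
    · exact ⟨⟨k + 1, hkn⟩, by simp only; omega, hxk⟩

end PrefixSignChanges

lemma strictMono_of_monotone_of_comp_eq {α β : Type*} [LinearOrder α] [Preorder β] {g : α → β}
    (hg : Monotone g) {f : β → α} (hf : ∀ m, g (f m) = m) : StrictMono f :=
  fun m m' h => hg.reflect_lt (by rwa [hf, hf])

section SignVariations

variable {n : ℕ}

lemma sMinus_zero : sMinus (0 : Fin n → ℝ) = 0 := by
  rw [sMinus, List.filter_eq_nil_iff.2 (by simp)]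
  rfl

lemma sPlus_le (y : Fin n → ℝ) : sPlus y ≤ n - 1 :=
  Finset.sup_le fun ε _ => by simpa using signChanges_le_length_sub_one (List.ofFn fun i =>
    if y i = 0 then (if ε i then (1 : ℝ) else -1) else y i)

/-- `g p` numbers the maximal run of entries of one sign containing `p` (a zero joins the run
before it, leading zeros the first run); consecutive runs have opposite signs. -/
lemma exists_sign_blocks {x : Fin n → ℝ} (hx : x ≠ 0) :
    ∃ (δ : ℝ) (g : Fin n → Fin (sMinus x + 1)), δ ≠ 0 ∧ Monotone g ∧
      (∀ p, 0 ≤ (-1 : ℝ) ^ (g p : ℕ) * δ * x p) ∧ ∀ m, ∃ p, g p = m ∧ x p ≠ 0 := by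
  obtain ⟨δ, hδ, hsign⟩ := exists_sign_prefixSignChanges x hx
  obtain ⟨i, -⟩ := Function.ne_iff.1 hx
  have hlt (p : Fin n) : prefixSignChanges x p < sMinus x + 1 := by
    rw [Nat.lt_succ_iff, ← prefixSignChanges_of_le x (j := n - 1) (by omega)]
    exact monotone_prefixSignChanges x (by omega)
  refine ⟨δ, fun p => ⟨_, hlt p⟩, hδ, fun p q hpq => monotone_prefixSignChanges x hpq,
    fun p => ?_, fun m => ?_⟩
  · rcases eq_or_ne (x p) 0 with h | h
    · simp [h]
    · exact (hsign p h).le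
  · obtain ⟨p, hp, hxp⟩ := exists_prefixSignChanges_eq x hx (Nat.le_of_lt_succ m.isLt)
    exact ⟨p, Fin.ext hp, hxp⟩

lemma exists_alternating {x : Fin n → ℝ} (hx : x ≠ 0) :
    ∃ (σ : ℝ) (i : Fin (sMinus x + 1) → Fin n), StrictMono i ∧
      ∀ j : Fin (sMinus x + 1), 0 < (-1 : ℝ) ^ (j : ℕ) * σ * x (i j) := by
  obtain ⟨δ, g, hδ, hg, hsign, hwit⟩ := exists_sign_blocks hx
  choose i hgi hxi using hwit
  refine ⟨δ, i, strictMono_of_monotone_of_comp_eq hg hgi, fun j => ?_⟩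
  have := hsign (i j)
  rw [hgi] at this
  exact lt_of_le_of_ne this (mul_ne_zero (mul_ne_zero (by simp) hδ) (hxi j)).symm

lemma le_sMinus_of_alternating {x : Fin n → ℝ} {k : ℕ} {σ : ℝ} {i : Fin (k + 1) → Fin n}
    (hi : StrictMono i) (halt : ∀ j : Fin (k + 1), 0 < (-1 : ℝ) ^ (j : ℕ) * σ * x (i j)) :
    k ≤ sMinus x := by
  have hx : x ≠ 0 := fun h => by simpa [h] using halt 0
  obtain ⟨δ, -, hsign⟩ := exists_sign_prefixSignChanges x hx
  have hpar (j : Fin (k + 1)) :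
      0 < (-1 : ℝ) ^ (prefixSignChanges x (i j) + j) * (δ * σ) := by
    have h₁ := hsign (i j) (right_ne_zero_of_mul (halt j).ne')
    have h₂ := halt j
    rw [pow_add]
    nlinarith [mul_pos h₁ h₂, sq_nonneg (x (i j))]
  have hstep : ∀ j : Fin (k + 1), (j : ℕ) ≤ prefixSignChanges x (i j) := by
    refine Fin.induction (Nat.zero_le _) fun j ih => ?_
    have hle := monotone_prefixSignChanges x (hi j.castSucc_lt_succ).le
    have hne : prefixSignChanges x (i j.castSucc) ≠ prefixSignChanges x (i j.succ) := by
      intro heq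
      have h₁ := hpar j.castSucc
      have h₂ := hpar j.succ
      rw [← heq, Fin.val_succ, ← add_assoc, pow_succ] at h₂
      rw [Fin.val_castSucc] at h₁
      linarith
    rw [Fin.val_castSucc] at ih
    rw [Fin.val_succ]
    omega
  calc k = (Fin.last k : ℕ) := rfl
    _ ≤ prefixSignChanges x (i (Fin.last k)) := hstep _
    _ ≤ prefixSignChanges x (n - 1) := monotone_prefixSignChanges x (by omega)
    _ = sMinus x := prefixSignChanges_of_le x (by omega)

lemma sMinus_le_sPlus (x : Fin n → ℝ) : sMinus x ≤ sPlus x := by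
  rcases eq_or_ne x 0 with rfl | hx
  · simp [sMinus_zero]
  obtain ⟨σ, i, hi, halt⟩ := exists_alternating hx
  set w : Fin n → ℝ := fun p => if x p = 0 then 1 else x p
  have hw (p : Fin n) : w p ≠ 0 := by
    by_cases h : x p = 0 <;> simp [w, h]
  have hwi (j : Fin (sMinus x + 1)) : w (i j) = x (i j) :=
    if_neg (right_ne_zero_of_mul (halt j).ne')
  calc sMinus x ≤ sMinus w := le_sMinus_of_alternating hi fun j => by rw [hwi]; exact halt j
    _ = signChanges (List.ofFn w) := sMinus_eq_signChanges hw
    _ ≤ sPlus x := Finset.le_sup (f := fun ε : Fin n → Bool => signChanges (List.ofFn fun p =>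
        if x p = 0 then (if ε p then (1 : ℝ) else -1) else x p)) (Finset.mem_univ fun _ => true)

lemma exists_weakly_alternating_of_le_sPlus (hn : 0 < n) {y : Fin n → ℝ} {k : ℕ}
    (hk : k ≤ sPlus y) : ∃ (σ : ℝ) (i : Fin (k + 1) → Fin n), σ ≠ 0 ∧ StrictMono i ∧
      ∀ j : Fin (k + 1), 0 ≤ (-1 : ℝ) ^ (j : ℕ) * σ * y (i j) := by
  obtain ⟨ε, -, hε⟩ := Finset.exists_mem_eq_sup Finset.univ Finset.univ_nonempty
    fun ε : Fin n → Bool => signChanges (List.ofFn fun p =>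
      if y p = 0 then (if ε p then (1 : ℝ) else -1) else y p)
  set w : Fin n → ℝ := fun p => if y p = 0 then (if ε p then 1 else -1) else y p
  have hw (p : Fin n) : w p ≠ 0 := by
    by_cases h : y p = 0 <;> by_cases h' : ε p <;> simp [w, h, h']
  have hkw : k ≤ sMinus w := by
    rw [sMinus_eq_signChanges hw]
    exact hk.trans_eq hε
  obtain ⟨σ, i, hi, halt⟩ := exists_alternating (x := w) (Function.ne_iff.2 ⟨⟨0, hn⟩, hw _⟩)
  refine ⟨σ, i ∘ Fin.castLE (by omega), fun h => by simpa [h] using halt 0,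
    hi.comp (Fin.strictMono_castLE _), fun j => ?_⟩
  have := halt (Fin.castLE (by omega) j)
  simp only [Function.comp_apply, Fin.val_castLE] at this ⊢
  by_cases h : y (i (Fin.castLE (by omega) j)) = 0
  · simp [h]
  · simp only [w, if_neg h] at this
    exact this.le

end SignVariations

namespace Matrix

theorem det_mul_eq_sum_prod_mul_det {R : Type*} [CommRing R] {m n : Type*} [Fintype m]
    [DecidableEq m] [Fintype n] (A : Matrix m n R) (C : Matrix n m R) :
    (A * C).det = ∑ f : m → n, (∏ i, C (f i) i) * (A.submatrix id f).det := by
  have hcols : (A * C)ᵀ = fun i => ∑ p, C p i • fun q => A q p := by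
    ext i q
    simp [Matrix.mul_apply, mul_comm]
  rw [← det_transpose, hcols]
  change detRowAlternating.toMultilinearMap _ = _
  rw [MultilinearMap.map_sum]
  refine Finset.sum_congr rfl fun f _ => ?_
  rw [MultilinearMap.map_smul_univ, smul_eq_mul, ← det_transpose]
  rfl

end Matrix

section TotalPositivity

variable {n s : ℕ}

lemma det_mul_pos_of_block_support {A : Matrix (Fin s) (Fin n) ℝ}
    (hA : ∀ f : Fin s → Fin n, StrictMono f → 0 < (A.submatrix id f).det)
    {C : Matrix (Fin n) (Fin s) ℝ} (hC : ∀ p m, 0 ≤ C p m) {g : Fin n → Fin s} (hg : Monotone g)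
    (hsupp : ∀ p m, C p m ≠ 0 → g p = m) (hcol : ∀ m, ∃ p, C p m ≠ 0) :
    0 < (A * C).det := by
  have hterm (f : Fin s → Fin n) (hf : ∀ m, C (f m) m ≠ 0) :
      0 < (∏ m, C (f m) m) * (A.submatrix id f).det :=
    mul_pos (Finset.prod_pos fun m _ => (hC _ _).lt_of_ne' (hf m))
      (hA f (strictMono_of_monotone_of_comp_eq hg fun m => hsupp _ _ (hf m)))
  choose f₀ hf₀ using hcol
  rw [Matrix.det_mul_eq_sum_prod_mul_det]
  refine Finset.sum_pos' (fun f _ => ?_) ⟨f₀, Finset.mem_univ _, hterm f₀ hf₀⟩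
  by_cases hf : ∀ m, C (f m) m ≠ 0
  · exact (hterm f hf).le
  · obtain ⟨m, hm⟩ := not_forall_not.1 hf
    rw [Finset.prod_eq_zero (f := fun m => C (f m) m) (Finset.mem_univ m) hm, zero_mul]

lemma exists_mulVec_eq_of_isTP {P : Matrix (Fin n) (Fin n) ℝ} (hP : IsTP P) {x : Fin n → ℝ}
    (hx : x ≠ 0) : ∃ (U : Matrix (Fin n) (Fin (sMinus x + 1)) ℝ) (w : Fin (sMinus x + 1) → ℝ),
      (∀ r, StrictMono r → 0 < (U.submatrix r id).det) ∧ w ≠ 0 ∧ P *ᵥ x = U *ᵥ w := by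
  obtain ⟨δ, g, hδ, hg, hsign, hwit⟩ := exists_sign_blocks hx
  set C : Matrix (Fin n) (Fin (sMinus x + 1)) ℝ :=
    of fun p m => if g p = m then (-1 : ℝ) ^ (m : ℕ) * δ * x p else 0
  set w : Fin (sMinus x + 1) → ℝ := fun m => (-1 : ℝ) ^ (m : ℕ) * δ⁻¹
  have hCw : C *ᵥ w = x := by
    ext p
    rw [mulVec, dotProduct, Finset.sum_eq_single (g p) (fun m _ hm => by simp [C, Ne.symm hm])
      (by simp)]
    simp only [C, w, of_apply, if_true]
    field_simp
    simp [← pow_mul]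
  refine ⟨P * C, w, fun r hr => ?_, fun h => by simpa [w, hδ] using congrFun h 0, ?_⟩
  · rw [submatrix_mul _ _ _ id _ Function.bijective_id, submatrix_id_id]
    refine det_mul_pos_of_block_support (fun f hf => by simpa using hP _ _ _ hr hf)
      (fun p m => ?_) hg (fun p m h => by_contra fun hne => h (if_neg hne)) (fun m => ?_)
    · simp only [C, of_apply]
      split_ifs with h
      · exact h ▸ hsign p
      · exact le_rfl
    · obtain ⟨p, hp, hxp⟩ := hwit m
      exact ⟨p, by simp [C, hp, hδ, hxp]⟩
  · rw [← mulVec_mulVec, hCw]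

end TotalPositivity

section VariationDiminishing

variable {n s : ℕ}

/-- The `(s+1) × (s+1)` matrix `[U | U *ᵥ w]` is singular; expanding its determinant along the
last column gives `∑ j, (-1) ^ j (U *ᵥ w) j D_j = 0` with all `D_j > 0`, so a weakly
alternating `U *ᵥ w` vanishes, and then so does `w`. -/
lemma eq_zero_of_alternating_mulVec (U : Matrix (Fin (s + 1)) (Fin s) ℝ)
    (hU : ∀ j : Fin (s + 1), 0 < (U.submatrix j.succAbove id).det) {σ : ℝ} (hσ : σ ≠ 0)
    {w : Fin s → ℝ}
    (halt : ∀ j : Fin (s + 1), 0 ≤ (-1 : ℝ) ^ (j : ℕ) * σ * (U *ᵥ w) j) : w = 0 := by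
  set v := U *ᵥ w
  set M : Matrix (Fin (s + 1)) (Fin (s + 1)) ℝ := of fun j => Fin.snoc (U j) (v j)
  have hM : M.det = 0 := by
    refine exists_mulVec_eq_zero_iff.1 ⟨Fin.snoc w (-1), fun h => ?_, ?_⟩
    · simpa using congrFun h (Fin.last s)
    · ext j
      simp [M, v, mulVec, dotProduct, Fin.sum_univ_castSucc]
  have hexp : ∑ j : Fin (s + 1),
      ((-1 : ℝ) ^ (j : ℕ) * σ * v j) * (U.submatrix j.succAbove id).det = 0 := by
    have := congrArg (σ * (-1 : ℝ) ^ s * ·) (det_succ_column M (Fin.last s))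
    simp only [hM, mul_zero, Finset.mul_sum] at this
    rw [this]
    refine Finset.sum_congr rfl fun j _ => ?_
    have hsub : M.submatrix j.succAbove (Fin.last s).succAbove = U.submatrix j.succAbove id := by
      ext p q
      simp [M]
    simp only [hsub, M, of_apply, Fin.snoc_last, Fin.val_last, pow_add]
    have hs : ((-1 : ℝ) ^ s) ^ 2 = 1 := by simp [← pow_mul]
    linear_combination (-((-1 : ℝ) ^ (j : ℕ) * σ * v j * (U.submatrix j.succAbove id).det)) * hs
  have hv : v = 0 := by
    ext j
    have := (Finset.sum_eq_zero_iff_of_nonneg fun j _ => mul_nonneg (halt j) (hU j).le).1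
      hexp j (Finset.mem_univ j)
    simpa [hσ, (hU j).ne'] using this
  by_contra hw
  refine (hU (Fin.last s)).ne' (exists_mulVec_eq_zero_iff.1 ⟨w, hw, ?_⟩)
  ext q
  simpa [v, mulVec, dotProduct] using congrFun hv ((Fin.last s).succAbove q)

lemma sPlus_mulVec_lt {U : Matrix (Fin n) (Fin s) ℝ}
    (hU : ∀ r : Fin s → Fin n, StrictMono r → 0 < (U.submatrix r id).det) {w : Fin s → ℝ}
    (hw : w ≠ 0) : sPlus (U *ᵥ w) < s := by
  by_contra! h
  have hs : 0 < s := Nat.pos_of_ne_zero fun hs => hw (funext fun m => (hs ▸ m).elim0)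
  have hn : 0 < n := by have := sPlus_le (U *ᵥ w); omega
  obtain ⟨σ, i, hσ, hi, halt⟩ := exists_weakly_alternating_of_le_sPlus hn h
  refine hw (eq_zero_of_alternating_mulVec (U.submatrix i id)
    (fun j => by simpa using hU _ (hi.comp (Fin.strictMono_succAbove j))) hσ fun j => ?_)
  simpa [mulVec, dotProduct] using halt j

theorem IsTP.sPlus_mulVec_le_sMinus {P : Matrix (Fin n) (Fin n) ℝ} (hP : IsTP P)
    {x : Fin n → ℝ} (hx : x ≠ 0) : sPlus (P *ᵥ x) ≤ sMinus x := by
  obtain ⟨U, w, hU, hw, hPx⟩ := exists_mulVec_eq_of_isTP hP hx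
  rw [hPx]
  exact Nat.le_of_lt_succ (sPlus_mulVec_lt hU hw)

end VariationDiminishing

lemma IsTP.det_pos {n : ℕ} {P : Matrix (Fin n) (Fin n) ℝ} (hP : IsTP P) : 0 < P.det := by
  simpa using hP n id id strictMono_id strictMono_id

lemma exists_finset_card_le_of_injOn {α : Type*} {S : Set α} {f : α → ℕ} {N : ℕ}
    (hf : InjOn f S) (hN : ∀ t ∈ S, f t < N) : ∃ F : Finset α, F.card ≤ N ∧ S ⊆ F := by
  have hmaps : MapsTo f S (Finset.range N) := fun t ht => by simpa using hN t ht
  have hS : S.Finite := Set.Finite.of_finite_image ((Finset.range N).finite_toSet.subset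
    (image_subset_iff.2 hmaps)) hf
  refine ⟨hS.toFinset, ?_, by simp⟩
  exact (Finset.card_le_card_of_injOn (s := hS.toFinset) f (by rwa [hS.coe_toFinset])
    (by rwa [hS.coe_toFinset])).trans_eq (Finset.card_range N)

theorem stmt4_general {n : ℕ}
    (a b : ℝ)
    (Φ : ℝ → ℝ → Matrix (Fin n) (Fin n) ℝ)
    (hTP : ∀ t0 t : ℝ, a < t0 → t0 < t → t < b → IsTP (Φ t t0))
    (z : ℝ → Fin n → ℝ)
    (hz : ∀ t0 ∈ Set.Ioo a b, ∀ t ∈ Set.Ioo a b, t0 ≤ t → z t = (Φ t t0).mulVec (z t0))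
    (hz0 : ∃ t1 ∈ Set.Ioo a b, z t1 ≠ 0)
    :
    ∃ S : Finset ℝ, S.card ≤ n - 1 ∧
      ∀ t ∈ Set.Ioo a b, t ∉ S → sMinus (z t) = sPlus (z t) := by
  obtain ⟨t₁, ht₁, hzt₁⟩ := hz0
  have hne : ∀ t ∈ Ioo a b, z t ≠ 0 := by
    intro t ht hzt
    rcases le_or_gt t t₁ with hle | hlt
    · exact hzt₁ (by rw [hz t ht t₁ ht₁ hle, hzt, mulVec_zero])
    · rw [hz t₁ ht₁ t ht hlt.le] at hzt
      exact (hTP t₁ t ht₁.1 hlt ht.2).det_pos.ne' (exists_mulVec_eq_zero_iff.1 ⟨_, hzt₁, hzt⟩)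
  have hdec : ∀ t ∈ Ioo a b, ∀ t' ∈ Ioo a b, t < t' → sPlus (z t') ≤ sMinus (z t) :=
    fun t ht t' ht' h => hz t ht t' ht' h.le ▸
      (hTP t t' ht.1 h ht'.2).sPlus_mulVec_le_sMinus (hne t ht)
  set E : Set ℝ := {t ∈ Ioo a b | sMinus (z t) ≠ sPlus (z t)}
  have hlt : ∀ t ∈ E, sMinus (z t) < sPlus (z t) := fun t ht => (sMinus_le_sPlus _).lt_of_ne ht.2
  have hanti : StrictAntiOn (fun t => sMinus (z t)) E :=
    fun t ht t' ht' h => (hlt t' ht').trans_le (hdec t ht.1 t' ht'.1 h)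
  obtain ⟨F, hF, hsub⟩ := exists_finset_card_le_of_injOn hanti.injOn
    fun t ht => (hlt t ht).trans_le (sPlus_le _)
  exact ⟨F, hF, fun t ht htF => by_contra fun h => htF (hsub ⟨ht, h⟩)⟩

/-- If the transition matrix `Φ(t,t0)` of `ż = A(t)z` is TP for all
`a < t0 < t < b`, then any nontrivial solution `z` satisfies `z(t) ∈ V`, i.e.
`s^-(z(t)) = s^+(z(t))`, for all `t ∈ (a,b)` except possibly up to `n - 1` values. -/
theorem stmt4 {n : ℕ}
    (a b : ℝ) (A : ℝ → Matrix (Fin n) (Fin n) ℝ)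
    (Φ : ℝ → ℝ → Matrix (Fin n) (Fin n) ℝ)
    (hreg : GoodCoeff a b A) (htrans : IsTransitionOn a b A Φ)
    (hTP : ∀ t0 t : ℝ, a < t0 → t0 < t → t < b → IsTP (Φ t t0))
    (z : ℝ → Fin n → ℝ)
    (hz : ∀ t0 ∈ Set.Ioo a b, ∀ t ∈ Set.Ioo a b, t0 ≤ t → z t = (Φ t t0).mulVec (z t0))
    (hz0 : ∃ t1 ∈ Set.Ioo a b, z t1 ≠ 0)
    :
    ∃ S : Finset ℝ, S.card ≤ n - 1 ∧
      ∀ t ∈ Set.Ioo a b, t ∉ S → sMinus (z t) = sPlus (z t) :=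
  stmt4_general a b Φ hTP z hz hz0

end
end
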